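/- Let R be a commutative ring, S a multiplicative subset of R, M an R-module, and A a submodule of an R-module B. If M is u-S-projective relative to B, then M is u-S-projective relative to A and M is u-S-projective relative to the quotient B/A. -/

import Mathlib

universe u v w

variable (R : Type u) [CommRing R]

/-- An `R`-module `T` is uniformly `S`-torsion if there is `s ∈ S` with `s • T = 0`. -/
def IsUSTorsion (S : Submonoid R) (T : Type*) [AddCommGroup T] [Module R T] : Prop :=
  ∃ s ∈ S, ∀ t : T, s • t = 0

/-- `f` is a `u`-`S`-epimorphism if its cokernel is uniformly `S`-torsion. -/
def IsUSEpi (S : Submonoid R) {M N : Type*} [AddCommGroup M] [Module R M]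
    [AddCommGroup N] [Module R N] (f : M →ₗ[R] N) : Prop :=
  IsUSTorsion R S (N ⧸ LinearMap.range f)

/-- `f` is a `u`-`S`-monomorphism if its kernel is uniformly `S`-torsion. -/
def IsUSMono (S : Submonoid R) {M N : Type*} [AddCommGroup M] [Module R M]
    [AddCommGroup N] [Module R N] (f : M →ₗ[R] N) : Prop :=
  IsUSTorsion R S (LinearMap.ker f)

/-- `P` is `u`-`S`-projective relative to `M` if for every `u`-`S`-epimorphism
`f : M → N`, the induced map `Hom(P,M) → Hom(P,N)` is a `u`-`S`-epimorphism. -/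
def IsUSProjRel (S : Submonoid R) (P : Type w) [AddCommGroup P] [Module R P]
    (M : Type v) [AddCommGroup M] [Module R M] : Prop :=
  ∀ (N : Type v) [AddCommGroup N] [Module R N] (f : M →ₗ[R] N),
    IsUSEpi R S f → IsUSEpi R S (LinearMap.llcomp R P M N f : (P →ₗ[R] M) →ₗ[R] (P →ₗ[R] N))

/-- `E` is `u`-`S`-injective relative to `M` if for every `u`-`S`-monomorphism
`f : K → M`, the induced map `Hom(M,E) → Hom(K,E)` is a `u`-`S`-epimorphism. -/
def IsUSInjRel (S : Submonoid R) (E : Type w) [AddCommGroup E] [Module R E]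
    (M : Type v) [AddCommGroup M] [Module R M] : Prop :=
  ∀ (K : Type v) [AddCommGroup K] [Module R K] (f : K →ₗ[R] M),
    IsUSMono R S f → IsUSEpi R S (LinearMap.lcomp R E f)


lemma isUSEpi_iff {S : Submonoid R} {M N : Type*} [AddCommGroup M] [Module R M]
    [AddCommGroup N] [Module R N] (f : M →ₗ[R] N) :
    IsUSEpi R S f ↔ ∃ s ∈ S, ∀ n : N, s • n ∈ LinearMap.range f := by
  unfold IsUSEpi IsUSTorsion
  constructor
  · rintro ⟨s, hs, h⟩
    refine ⟨s, hs, fun n => ?_⟩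
    have := h (Submodule.Quotient.mk n)
    rwa [← Submodule.Quotient.mk_smul, Submodule.Quotient.mk_eq_zero] at this
  · rintro ⟨s, hs, h⟩
    refine ⟨s, hs, fun t => ?_⟩
    obtain ⟨n, rfl⟩ := Submodule.Quotient.mk_surjective _ t
    rw [← Submodule.Quotient.mk_smul, Submodule.Quotient.mk_eq_zero]
    exact h n

theorem stmt9 (S : Submonoid R) (hS : (0 : R) ∉ S)
    (M : Type w) [AddCommGroup M] [Module R M]
    (B : Type v) [AddCommGroup B] [Module R B] (A : Submodule R B)
    (hM : IsUSProjRel R S M B) :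
    IsUSProjRel R S M A ∧ IsUSProjRel R S M (B ⧸ A) := by
  constructor
  · -- relative to the submodule A, via pushout
    intro N _ _ f hf
    rw [isUSEpi_iff] at hf
    obtain ⟨s₀, hs₀, h₀⟩ := hf
    set D : Submodule R (B × N) := LinearMap.range (LinearMap.prod A.subtype (-f)) with hD
    set q : B →ₗ[R] (B × N) ⧸ D := D.mkQ.comp (LinearMap.inl R B N) with hq
    set ι : N →ₗ[R] (B × N) ⧸ D := D.mkQ.comp (LinearMap.inr R B N) with hι
    have hqepi : IsUSEpi R S q := by
      rw [isUSEpi_iff]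
      refine ⟨s₀, hs₀, fun n' => ?_⟩
      obtain ⟨⟨b, n⟩, rfl⟩ := Submodule.Quotient.mk_surjective _ n'
      obtain ⟨a, ha⟩ := h₀ n
      refine ⟨s₀ • b + (a : B), ?_⟩
      have : ((s₀ • b + (a : B), 0) : B × N) - s₀ • (b, n) ∈ D := by
        refine ⟨a, ?_⟩
        simp [Prod.ext_iff, ha]
      have heq : q (s₀ • b + (a : B)) - s₀ • Submodule.Quotient.mk (b, n) = 0 := by
        rw [show q (s₀ • b + (a : B))
              = Submodule.Quotient.mk ((s₀ • b + (a : B), 0) : B × N) from rfl,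
          ← Submodule.Quotient.mk_smul, ← Submodule.Quotient.mk_sub,
          Submodule.Quotient.mk_eq_zero]
        exact this
      exact sub_eq_zero.mp heq
    obtain ⟨s₁, hs₁, h₁⟩ := (isUSEpi_iff R _).mp (hM _ q hqepi)
    rw [isUSEpi_iff]
    refine ⟨s₁, hs₁, fun g => ?_⟩
    obtain ⟨k, hk⟩ := h₁ (ι.comp g)
    -- hk : llcomp q k = s₁ • (ι ∘ g), i.e. q ∘ k = ι ∘ (s₁ • g)
    have hk' : ∀ m : M, ∃ a : A, (a : B) = k m ∧ f a = s₁ • g m := by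
      intro m
      have := congrArg (fun (φ : M →ₗ[R] (B × N) ⧸ D) => φ m) hk
      simp only [LinearMap.llcomp_apply, LinearMap.smul_apply, LinearMap.coe_comp,
        Function.comp_apply] at this
      have hmem : ((k m, -(s₁ • g m)) : B × N) ∈ D := by
        rw [← Submodule.Quotient.mk_eq_zero]
        have : Submodule.Quotient.mk (p := D) ((k m, 0) : B × N)
            = Submodule.Quotient.mk ((0, s₁ • g m) : B × N) := by
          have h1 : q (k m) = Submodule.Quotient.mk ((k m, 0) : B × N) := rfl
          have h2 : s₁ • ι (g m) = Submodule.Quotient.mk ((0, s₁ • g m) : B × N) := by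
            simp [hι, ← Submodule.Quotient.mk_smul]
          rw [← h1, ← h2, this]
        calc Submodule.Quotient.mk (p := D) ((k m, -(s₁ • g m)) : B × N)
            = Submodule.Quotient.mk (p := D) ((k m, 0) : B × N)
              - Submodule.Quotient.mk ((0, s₁ • g m) : B × N) := by
                rw [← Submodule.Quotient.mk_sub]; congr 1; simp
          _ = 0 := by rw [this, sub_self]
      obtain ⟨a, ha⟩ := hmem
      simp only [LinearMap.prod_apply, Function.prod, LinearMap.neg_apply, Prod.ext_iff,
        Submodule.coe_subtype] at ha
      exact ⟨a, ha.1, by have := ha.2; rwa [neg_eq_iff_eq_neg, neg_neg] at this⟩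
    have hkA : ∀ m : M, k m ∈ A := fun m => by
      obtain ⟨a, ha, _⟩ := hk' m; exact ha ▸ a.2
    refine ⟨LinearMap.codRestrict A k hkA, ?_⟩
    ext m
    obtain ⟨a, ha, hfa⟩ := hk' m
    have : LinearMap.codRestrict A k hkA m = a := Subtype.ext (by simp [ha])
    simp only [LinearMap.llcomp_apply, this, hfa, LinearMap.smul_apply]
  · -- relative to the quotient B ⧸ A
    intro N _ _ f hf
    have hfπ : IsUSEpi R S (f.comp A.mkQ) := by
      rw [isUSEpi_iff] at hf ⊢
      obtain ⟨s, hs, h⟩ := hf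
      refine ⟨s, hs, fun n => ?_⟩
      obtain ⟨x, hx⟩ := h n
      obtain ⟨b, rfl⟩ := Submodule.Quotient.mk_surjective _ x
      exact ⟨b, hx⟩
    obtain ⟨s, hs, h⟩ := (isUSEpi_iff R _).mp (hM _ (f.comp A.mkQ) hfπ)
    rw [isUSEpi_iff]
    refine ⟨s, hs, fun g => ?_⟩
    obtain ⟨k, hk⟩ := h g
    refine ⟨A.mkQ.comp k, ?_⟩
    rw [← hk]
    ext m
    simp
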